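/- arXiv:1611.07170 — 2 statements merged into one kernel-verified Lean document; each statement's English description precedes it below -/
import Mathlib

section
/- Let n, s ∈ ℕ. A matrix pencil K(λ) ∈ F[λ]^{sn×(s+1)n} satisfying K(λ)(Λ_s(λ)^T ⊗ I_n) = 0 is a minimal basis dual to Λ_s(λ) ⊗ I_n if and only if K(λ) = B (L_s(λ) ⊗ I_n) for some nonsingular matrix B ∈ F^{sn×sn}. -/
open Polynomial Matrix

/-- The row of a polynomial matrix viewed as a vector of rational functions. -/
noncomputable def ratRow {F : Type*} [Field F] {ν : Type*} (v : ν → Polynomial F) :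
    ν → RatFunc F :=
  fun j => algebraMap (Polynomial F) (RatFunc F) (v j)

/-- The rational subspace spanned by the rows of a polynomial matrix. -/
noncomputable def rowSpan {F : Type*} [Field F] {ρ ν : Type*}
    (Q : Matrix ρ ν (Polynomial F)) : Submodule (RatFunc F) (ν → RatFunc F) :=
  Submodule.span (RatFunc F) (Set.range fun i => ratRow (Q i))

/-- Degree of a polynomial row vector: the maximum of the degrees of its entries. -/
noncomputable def rowDegree {F : Type*} [Field F] {ν : Type*} [Fintype ν]
    (v : ν → Polynomial F) : ℕ :=
  Finset.univ.sup fun j => (v j).natDegree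

/-- The order of a polynomial matrix: the sum of its row degrees. -/
noncomputable def polyOrder {F : Type*} [Field F] {ρ ν : Type*} [Fintype ρ] [Fintype ν]
    (Q : Matrix ρ ν (Polynomial F)) : ℕ :=
  ∑ i, rowDegree (Q i)

/-- `Q` is a minimal basis: its rows are linearly independent over the field of rational
functions (hence a polynomial basis of the rational subspace they span), and any other
polynomial matrix whose rows form a polynomial basis of the same subspace has order
at least the order of `Q`. -/
def IsMinimalBasis {F : Type*} [Field F] {ρ ν : Type*} [Fintype ρ] [Fintype ν]
    (Q : Matrix ρ ν (Polynomial F)) : Prop :=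
  LinearIndependent (RatFunc F) (fun i => ratRow (Q i)) ∧
  ∀ (m : ℕ) (R : Matrix (Fin m) ν (Polynomial F)),
    LinearIndependent (RatFunc F) (fun i => ratRow (R i)) →
    rowSpan R = rowSpan Q → polyOrder Q ≤ polyOrder R

/-- The pencil `L_s(λ)` with `-1` on the diagonal and `λ` on the superdiagonal. -/
noncomputable def Lpoly (F : Type*) [Field F] (s : ℕ) :
    Matrix (Fin s) (Fin (s+1)) (Polynomial F) :=
  Matrix.of fun i j =>
    if (j : ℕ) = (i : ℕ) then -1 else if (j : ℕ) = (i : ℕ) + 1 then X else 0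

/-- The row vector `Λ_s(λ) = [λ^s, λ^{s-1}, ..., λ, 1]`. -/
noncomputable def LamPoly (F : Type*) [Field F] (s : ℕ) :
    Matrix (Fin 1) (Fin (s+1)) (Polynomial F) :=
  Matrix.of fun _ j => X ^ (s - (j : ℕ))

open Kronecker

/-!
Fix a row `r` of `K` and a column block `u`. The entries `pⱼ = K r (j, u)` satisfy
`deg pⱼ ≤ 1` and `∑ⱼ pⱼ λ^(s-j) = 0`; comparing the coefficients of `λ^(s+1)`, `λ^(s-i)` and
`λ⁰` gives `p = b L_s(λ)`, where `bᵢ` is the `λ`-coefficient of `p_{i+1}`. Hence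
`K = B (L_s ⊗ Iₙ)` with a constant `B`. The first `s` columns of `L_s` form a triangular
matrix with diagonal `-1`, so the rows of `L_s ⊗ Iₙ` are independent, and the rows of
`B (L_s ⊗ Iₙ)` are independent exactly when `B` is nonsingular.

Minimality is a degree count: if a basis of an `m`-dimensional rational space consists of
polynomial rows of degree `≤ d` while every nonzero polynomial vector of the space has degree
`≥ d`, then any other polynomial basis has order `≥ m d`. For `K` one takes `d = 1`, as no
nonzero constant vector satisfies the wing relation; for `Λ_s ⊗ Iₙ` one takes `d = s`, as every
vector of its row space is, blockwise, a multiple of `Λ_s`.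
-/

theorem Fin.sum_ite_succ_eq_cons {M : Type*} [AddCommMonoid M] {s : ℕ} (b : Fin s → M)
    (j : Fin (s+1)) :
    (∑ i, if j = i.succ then b i else 0) = (Fin.cons 0 b : Fin (s+1) → M) j := by
  cases j using Fin.cases <;> simp [eq_comm, Fin.succ_ne_zero]

theorem Fin.sum_ite_castSucc_eq_snoc {M : Type*} [AddCommMonoid M] {s : ℕ} (b : Fin s → M)
    (j : Fin (s+1)) :
    (∑ i, if j = i.castSucc then b i else 0) = (Fin.snoc b 0 : Fin (s+1) → M) j := by
  cases j using Fin.lastCases <;> simp [eq_comm, Fin.castSucc_ne_last]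

namespace Matrix

section Kronecker

variable {R : Type*} [CommSemiring R] {ι κ n : Type*} [Fintype ι] [Fintype n] [DecidableEq n]

theorem vecMul_kronecker_one_apply (v : ι × n → R) (P : Matrix ι κ R) (j : κ) (u : n) :
    (v ᵥ* (P ⊗ₖ (1 : Matrix n n R))) (j, u) = ((fun i => v (i, u)) ᵥ* P) j := by
  simp [vecMul, dotProduct, Fintype.sum_prod_type, one_apply]

theorem vecMul_kronecker_one_eq_zero_iff {v : ι × n → R} {P : Matrix ι κ R} :
    v ᵥ* (P ⊗ₖ (1 : Matrix n n R)) = 0 ↔ ∀ u, (fun i => v (i, u)) ᵥ* P = 0 := by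
  simp only [funext_iff, Prod.forall, vecMul_kronecker_one_apply, Pi.zero_apply]
  exact forall_comm

theorem linearIndependent_rows_kronecker_one {P : Matrix ι κ R}
    (hP : LinearIndependent R P.row) :
    LinearIndependent R (P ⊗ₖ (1 : Matrix n n R)).row := by
  rw [← vecMul_injective_iff] at hP ⊢
  intro v w hvw
  funext ⟨i, u⟩
  have := hP (funext fun j => by
    simpa only [vecMul_kronecker_one_apply] using congrFun hvw (j, u))
  exact congrFun this i

end Kronecker

section RowIndependence

variable {m k o : Type*} [Fintype m]

theorem linearIndependent_rows_of_mul {R : Type*} [CommSemiring R] [Fintype k]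
    {A : Matrix m k R} {P : Matrix k o R} (h : LinearIndependent R (A * P).row) :
    LinearIndependent R A.row := by
  rw [← vecMul_injective_iff] at h ⊢
  intro v w hvw
  exact h (by simp only [← vecMul_vecMul, hvw])

theorem linearIndependent_rows_mul_of_isUnit {R : Type*} [CommRing R] [DecidableEq m]
    {A : Matrix m m R} {P : Matrix m k R} (hA : IsUnit A) (hP : LinearIndependent R P.row) :
    LinearIndependent R (A * P).row := by
  rw [← vecMul_injective_iff] at hP ⊢
  intro v w hvw
  simp only [← vecMul_vecMul] at hvw
  exact vecMul_injective_of_isUnit hA (hP hvw)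

theorem isUnit_of_linearIndependent_rows_map {K S : Type*} [Field K] [CommRing S]
    [Nontrivial S] [DecidableEq m] {B : Matrix m m K} (f : K →+* S)
    (h : LinearIndependent S (B.map f).row) : IsUnit B := by
  rw [← linearIndependent_rows_iff_isUnit, ← vecMul_injective_iff]
  rw [← vecMul_injective_iff] at h
  intro v w hvw
  have hf : f ∘ v = f ∘ w := h <| funext fun j => by
    simp only [← RingHom.map_vecMul, hvw]
  exact funext fun i => f.injective (congrFun hf i)

end RowIndependence

end Matrix

section MinimalBasis

variable {F : Type*} [Field F] {ρ ν κ : Type*}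

theorem ratRow_injective : Function.Injective (ratRow : (ν → F[X]) → ν → RatFunc F) :=
  fun _ _ h => funext fun j => RatFunc.algebraMap_injective F (congrFun h j)

theorem ratRow_zero : ratRow (0 : ν → F[X]) = 0 := by
  ext; simp [ratRow]

theorem ratRow_vecMul [Fintype ν] (v : ν → F[X]) (M : Matrix ν κ F[X]) :
    ratRow (v ᵥ* M) = ratRow v ᵥ* M.map (algebraMap F[X] (RatFunc F)) :=
  funext (RingHom.map_vecMul _ M v)

theorem linearIndependent_ratRow_iff {Q : Matrix ρ ν F[X]} :
    LinearIndependent (RatFunc F) (fun i => ratRow (Q i)) ↔ LinearIndependent F[X] Q.row := by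
  rw [← LinearIndependent.iff_fractionRing F[X] (RatFunc F)]
  exact (LinearMap.compLeft (Algebra.linearMap F[X] (RatFunc F)) ν).linearIndependent_iff
    (LinearMap.ker_eq_bot_of_injective ratRow_injective)

theorem vecMul_eq_zero_of_ratRow_mem_rowSpan [Fintype ν] {Q : Matrix ρ ν F[X]}
    {M : Matrix ν κ F[X]} (hQM : Q * M = 0) {v : ν → F[X]} (hv : ratRow v ∈ rowSpan Q) :
    v ᵥ* M = 0 := by
  have hspan :
      rowSpan Q ≤ LinearMap.ker (M.map (algebraMap F[X] (RatFunc F))).vecMulLinear := by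
    refine Submodule.span_le.mpr ?_
    rintro _ ⟨i, rfl⟩
    change ratRow (Q i) ᵥ* _ = 0
    rw [← ratRow_vecMul]
    exact (congrArg ratRow (congrFun hQM i)).trans ratRow_zero
  apply ratRow_injective
  rw [ratRow_vecMul, ratRow_zero]
  exact hspan hv

theorem rowDegree_le_iff [Fintype ν] {v : ν → F[X]} {d : ℕ} :
    rowDegree v ≤ d ↔ ∀ j, (v j).natDegree ≤ d := by
  simp [rowDegree]

theorem natDegree_le_rowDegree [Fintype ν] (v : ν → F[X]) (j : ν) :
    (v j).natDegree ≤ rowDegree v :=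
  Finset.le_sup (f := fun j => (v j).natDegree) (Finset.mem_univ j)

theorem isMinimalBasis_of_rowDegree_le [Fintype ρ] [Fintype ν] {Q : Matrix ρ ν F[X]} (d : ℕ)
    (hQ : LinearIndependent (RatFunc F) fun i => ratRow (Q i))
    (hdeg : ∀ i, rowDegree (Q i) ≤ d)
    (hspan : ∀ v, ratRow v ∈ rowSpan Q → v ≠ 0 → d ≤ rowDegree v) :
    IsMinimalBasis Q := by
  refine ⟨hQ, fun m R hR hRQ => ?_⟩
  have hcard : Fintype.card ρ = m :=
    calc Fintype.card ρ = Module.finrank (RatFunc F) (rowSpan Q) := (finrank_span_eq_card hQ).symm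
      _ = Module.finrank (RatFunc F) (rowSpan R) := by rw [hRQ]
      _ = m := (finrank_span_eq_card hR).trans (Fintype.card_fin m)
  have hrow (i : Fin m) : d ≤ rowDegree (R i) := by
    refine hspan _ (hRQ ▸ Submodule.subset_span ⟨i, rfl⟩) fun h => hR.ne_zero i ?_
    rw [h, ratRow_zero]
  calc polyOrder Q ≤ ∑ _i : ρ, d := Finset.sum_le_sum fun i _ => hdeg i
    _ = ∑ _i : Fin m, d := by simp [hcard]
    _ ≤ polyOrder R := Finset.sum_le_sum fun i _ => hrow i

end MinimalBasis

section Pencils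

variable {F : Type*} [Field F] {s n : ℕ}

theorem Lpoly_apply_eq_sub (i : Fin s) (j : Fin (s+1)) :
    Lpoly F s i j = X * (if j = i.succ then 1 else 0) - (if j = i.castSucc then 1 else 0) := by
  simp only [Lpoly, of_apply, Fin.ext_iff, Fin.val_succ, Fin.val_castSucc]
  split_ifs <;> first | omega | ring

theorem vecMul_C_Lpoly (b : Fin s → F) (j : Fin (s+1)) :
    ((fun i => C (b i)) ᵥ* Lpoly F s) j =
      C ((Fin.cons 0 b : Fin (s+1) → F) j) * X - C ((Fin.snoc b 0 : Fin (s+1) → F) j) := by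
  simp only [vecMul, dotProduct, Lpoly_apply_eq_sub, mul_sub, mul_ite, mul_one, mul_zero,
    Finset.sum_sub_distrib, Fin.sum_ite_succ_eq_cons, Fin.sum_ite_castSucc_eq_snoc]
  congr 1
  · cases j using Fin.cases <;> simp
  · cases j using Fin.lastCases <;> simp

theorem linearIndependent_rows_Lpoly : LinearIndependent F[X] (Lpoly F s).row := by
  have hU : IsUnit ((Lpoly F s).submatrix id Fin.castSucc) := by
    rw [isUnit_iff_isUnit_det, det_of_isUpperTriangular]
    · simpa [Lpoly] using isUnit_one.neg.pow s
    · intro i j (hij : (j : ℕ) < i)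
      simp only [submatrix_apply, id, Lpoly, of_apply, Fin.val_castSucc]
      rw [if_neg (by omega), if_neg (by omega)]
  exact LinearIndependent.of_comp (LinearMap.funLeft F[X] F[X] Fin.castSucc)
    (linearIndependent_rows_of_isUnit hU)

theorem vecMul_LamPoly_transpose_apply (p : Fin (s+1) → F[X]) (o : Fin 1) :
    (p ᵥ* (LamPoly F s)ᵀ) o = ∑ j, p j * X ^ (s - (j : ℕ)) := rfl

theorem coeff_sum_mul_X_pow {p : Fin (s+1) → F[X]} (hdeg : ∀ j, (p j).natDegree ≤ 1) (d : ℕ) :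
    (∑ j, p j * X ^ (s - (j : ℕ))).coeff d =
      ∑ j : Fin (s+1), ((if d = s - (j : ℕ) + 1 then (p j).coeff 1 else 0) +
        (if d = s - (j : ℕ) then (p j).coeff 0 else 0)) := by
  rw [finsetSum_coeff]
  refine Finset.sum_congr rfl fun j _ => ?_
  conv_lhs => rw [eq_X_add_C_of_natDegree_le_one (hdeg j)]
  simp [add_mul, mul_assoc, ← pow_succ', coeff_X_pow, coeff_C_mul]

section WingRow

variable {p : Fin (s+1) → F[X]}

theorem coeff_one_eq_cons_of_vecMul_LamPoly_transpose_eq_zero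
    (hdeg : ∀ j, (p j).natDegree ≤ 1) (hp : p ᵥ* (LamPoly F s)ᵀ = 0) :
    (fun j => (p j).coeff 1) = Fin.cons 0 fun i => (p i.succ).coeff 1 := by
  funext j
  cases j using Fin.cases with
  | zero =>
    have h := coeff_sum_mul_X_pow hdeg (s + 1)
    rw [← vecMul_LamPoly_transpose_apply p 0, hp] at h
    have h1 (j : Fin (s+1)) : s + 1 = s - j + 1 ↔ j = 0 := by
      rw [Fin.ext_iff, Fin.val_zero]; omega
    have h2 (j : Fin (s+1)) : s + 1 ≠ s - j := by omega
    simpa only [h1, h2, if_false, add_zero, Finset.sum_ite_eq', Finset.mem_univ, if_true,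
      Pi.zero_apply, coeff_zero, eq_comm, Fin.cons_zero] using h
  | succ i => rfl

theorem coeff_zero_eq_neg_snoc_of_vecMul_LamPoly_transpose_eq_zero
    (hdeg : ∀ j, (p j).natDegree ≤ 1) (hp : p ᵥ* (LamPoly F s)ᵀ = 0) :
    (fun j => (p j).coeff 0) = -Fin.snoc (fun i => (p i.succ).coeff 1) 0 := by
  funext j
  cases j using Fin.lastCases with
  | last =>
    have h := coeff_sum_mul_X_pow hdeg 0
    rw [← vecMul_LamPoly_transpose_apply p 0, hp] at h
    have h1 (j : Fin (s+1)) : 0 ≠ s - j + 1 := by omega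
    have h2 (j : Fin (s+1)) : 0 = s - j ↔ j = Fin.last s := by
      rw [Fin.ext_iff, Fin.val_last]; omega
    simpa only [h1, h2, if_false, zero_add, Finset.sum_ite_eq', Finset.mem_univ, if_true,
      Pi.zero_apply, coeff_zero, eq_comm, Pi.neg_apply, Fin.snoc_last, neg_zero] using h
  | cast i =>
    have h := coeff_sum_mul_X_pow hdeg (s - i)
    rw [← vecMul_LamPoly_transpose_apply p 0, hp] at h
    have h1 (j : Fin (s+1)) : s - i = s - j + 1 ↔ j = i.succ := by
      rw [Fin.ext_iff, Fin.val_succ]; omega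
    have h2 (j : Fin (s+1)) : s - i = s - j ↔ j = i.castSucc := by
      rw [Fin.ext_iff, Fin.val_castSucc]; omega
    simp only [h1, h2, Finset.sum_add_distrib, Finset.sum_ite_eq', Finset.mem_univ, if_true,
      Pi.zero_apply, coeff_zero] at h
    simp only [Pi.neg_apply, Fin.snoc_castSucc]
    linear_combination -h

theorem eq_vecMul_Lpoly_of_vecMul_LamPoly_transpose_eq_zero
    (hdeg : ∀ j, (p j).natDegree ≤ 1) (hp : p ᵥ* (LamPoly F s)ᵀ = 0) :
    p = (fun i => C ((p i.succ).coeff 1)) ᵥ* Lpoly F s := by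
  funext j
  have h1 := congrFun (coeff_one_eq_cons_of_vecMul_LamPoly_transpose_eq_zero hdeg hp) j
  have h0 := congrFun (coeff_zero_eq_neg_snoc_of_vecMul_LamPoly_transpose_eq_zero hdeg hp) j
  conv_lhs => rw [eq_X_add_C_of_natDegree_le_one (hdeg j), h1, h0]
  rw [vecMul_C_Lpoly, Pi.neg_apply, C_neg, sub_eq_add_neg]

end WingRow

theorem exists_eq_map_C_mul_Lpoly_kronecker {ρ : Type*}
    {K : Matrix ρ (Fin (s+1) × Fin n) F[X]} (hpencil : ∀ r c, (K r c).natDegree ≤ 1)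
    (hwing : K * ((LamPoly F s)ᵀ ⊗ₖ (1 : Matrix (Fin n) (Fin n) F[X])) = 0) :
    ∃ B : Matrix ρ (Fin s × Fin n) F,
      K = B.map C * (Lpoly F s ⊗ₖ (1 : Matrix (Fin n) (Fin n) F[X])) := by
  refine ⟨of fun r x => (K r (x.1.succ, x.2)).coeff 1, ?_⟩
  refine Matrix.ext fun r ⟨j, u⟩ => ?_
  have hrow : (fun i => K r (i, u)) ᵥ* (LamPoly F s)ᵀ = 0 :=
    vecMul_kronecker_one_eq_zero_iff.mp (by rw [← mul_apply_eq_vecMul, hwing]; rfl) u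
  rw [mul_apply_eq_vecMul, vecMul_kronecker_one_apply]
  exact congrFun
    (eq_vecMul_Lpoly_of_vecMul_LamPoly_transpose_eq_zero (fun _ => hpencil r _) hrow) j

theorem one_le_rowDegree_of_vecMul_eq_zero {v : Fin (s+1) × Fin n → F[X]}
    (hv : v ᵥ* ((LamPoly F s)ᵀ ⊗ₖ (1 : Matrix (Fin n) (Fin n) F[X])) = 0) (hv0 : v ≠ 0) :
    1 ≤ rowDegree v := by
  by_contra! hlt
  have hdeg (c) : (v c).natDegree = 0 := by
    have := natDegree_le_rowDegree v c
    omega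
  refine hv0 (funext fun ⟨j, u⟩ => ?_)
  have hrow := eq_vecMul_Lpoly_of_vecMul_LamPoly_transpose_eq_zero
    (fun _ => (hdeg _).trans_le zero_le_one) (vecMul_kronecker_one_eq_zero_iff.mp hv u)
  rw [show (fun i : Fin s => C ((v (i.succ, u)).coeff 1)) = 0 from
    funext fun i => by simp [coeff_eq_zero_of_natDegree_lt, hdeg]] at hrow
  simpa using congrFun hrow j

theorem eq_mul_X_pow_of_ratRow_mem_rowSpan_LamPoly {v : Fin (s+1) × Fin n → F[X]}
    (hv : ratRow v ∈ rowSpan (LamPoly F s ⊗ₖ (1 : Matrix (Fin n) (Fin n) F[X])))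
    (j : Fin (s+1)) (u : Fin n) : v (j, u) = v (Fin.last s, u) * X ^ (s - (j : ℕ)) := by
  obtain ⟨c, hc⟩ := (Submodule.mem_span_range_iff_exists_fun _).mp hv
  have hval (j : Fin (s+1)) : algebraMap F[X] (RatFunc F) (v (j, u)) =
      c (0, u) * algebraMap F[X] (RatFunc F) (X ^ (s - (j : ℕ))) := by
    simpa [ratRow, LamPoly, one_apply, Fintype.sum_prod_type, apply_ite] using
      (congrFun hc (j, u)).symm
  apply RatFunc.algebraMap_injective F
  rw [map_mul, hval, hval]
  simp

theorem le_rowDegree_of_ratRow_mem_rowSpan_LamPoly {v : Fin (s+1) × Fin n → F[X]}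
    (hv : ratRow v ∈ rowSpan (LamPoly F s ⊗ₖ (1 : Matrix (Fin n) (Fin n) F[X])))
    (hv0 : v ≠ 0) : s ≤ rowDegree v := by
  obtain ⟨⟨j, u⟩, hju⟩ := Function.ne_iff.mp hv0
  have hlast : v (Fin.last s, u) ≠ 0 := fun h =>
    hju (by rw [eq_mul_X_pow_of_ratRow_mem_rowSpan_LamPoly hv j u, h, zero_mul]; rfl)
  calc s ≤ (v (0, u)).natDegree := by
        rw [eq_mul_X_pow_of_ratRow_mem_rowSpan_LamPoly hv 0 u,
          natDegree_mul hlast (pow_ne_zero _ X_ne_zero), natDegree_X_pow, Fin.val_zero]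
        exact le_add_self
    _ ≤ rowDegree v := natDegree_le_rowDegree v _

theorem isMinimalBasis_of_wing {ρ : Type*} [Fintype ρ] {K : Matrix ρ (Fin (s+1) × Fin n) F[X]}
    (hpencil : ∀ r c, (K r c).natDegree ≤ 1)
    (hwing : K * ((LamPoly F s)ᵀ ⊗ₖ (1 : Matrix (Fin n) (Fin n) F[X])) = 0)
    (hK : LinearIndependent (RatFunc F) fun r => ratRow (K r)) : IsMinimalBasis K :=
  isMinimalBasis_of_rowDegree_le 1 hK (fun r => rowDegree_le_iff.mpr (hpencil r))
    fun _ hv hv0 =>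
      one_le_rowDegree_of_vecMul_eq_zero (vecMul_eq_zero_of_ratRow_mem_rowSpan hwing hv) hv0

theorem isMinimalBasis_LamPoly_kronecker :
    IsMinimalBasis (LamPoly F s ⊗ₖ (1 : Matrix (Fin n) (Fin n) F[X])) := by
  have hΛ : LinearIndependent F[X] (LamPoly F s).row :=
    linearIndependent_unique_iff.mpr fun h => by simpa [LamPoly] using congrFun h (Fin.last s)
  refine isMinimalBasis_of_rowDegree_le s
    (linearIndependent_ratRow_iff.mpr (linearIndependent_rows_kronecker_one hΛ))
    (fun x => rowDegree_le_iff.mpr fun c => ?_)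
    fun _ hv hv0 => le_rowDegree_of_ratRow_mem_rowSpan_LamPoly hv hv0
  simp only [kroneckerMap_apply, LamPoly, of_apply, one_apply]
  split_ifs <;> simp

end Pencils

/-- Theorem: an `(s,n)`-wing pencil `K(λ)` (a pencil with `K(λ)(Λ_s(λ)ᵀ ⊗ Iₙ) = 0`) is a
minimal basis dual to `Λ_s(λ) ⊗ Iₙ` if and only if `K(λ) = B (L_s(λ) ⊗ Iₙ)` for some
nonsingular constant matrix `B`. -/
theorem wing_pencil_dual_minimal_basis_iff (F : Type*) [Field F] (s n : ℕ)
    (K : Matrix (Fin s × Fin n) (Fin (s+1) × Fin n) (Polynomial F))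
    (hpencil : ∀ r c, (K r c).natDegree ≤ 1)
    (hwing : K * ((LamPoly F s)ᵀ ⊗ₖ (1 : Matrix (Fin n) (Fin n) (Polynomial F))) = 0) :
    (IsMinimalBasis K ∧
      IsMinimalBasis ((LamPoly F s) ⊗ₖ (1 : Matrix (Fin n) (Fin n) (Polynomial F))) ∧
      K * ((LamPoly F s) ⊗ₖ (1 : Matrix (Fin n) (Fin n) (Polynomial F)))ᵀ = 0) ↔
    ∃ B : Matrix (Fin s × Fin n) (Fin s × Fin n) F,
      IsUnit B ∧
        K = B.map Polynomial.C *
          ((Lpoly F s) ⊗ₖ (1 : Matrix (Fin n) (Fin n) (Polynomial F))) := by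
  have hdual : K * (LamPoly F s ⊗ₖ (1 : Matrix (Fin n) (Fin n) F[X]))ᵀ = 0 := by
    rwa [← kroneckerMap_transpose, transpose_one]
  constructor
  · rintro ⟨⟨hK, -⟩, -, -⟩
    obtain ⟨B, hB⟩ := exists_eq_map_C_mul_Lpoly_kronecker hpencil hwing
    rw [linearIndependent_ratRow_iff, hB] at hK
    exact ⟨B, isUnit_of_linearIndependent_rows_map C (linearIndependent_rows_of_mul hK), hB⟩
  · rintro ⟨B, hB, hKB⟩
    have hK : LinearIndependent (RatFunc F) fun r => ratRow (K r) := by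
      rw [linearIndependent_ratRow_iff, hKB]
      exact linearIndependent_rows_mul_of_isUnit (hB.map (C : F →+* F[X]).mapMatrix)
        (linearIndependent_rows_kronecker_one linearIndependent_rows_Lpoly)
    exact ⟨isMinimalBasis_of_wing hpencil hwing hK, isMinimalBasis_LamPoly_kronecker, hdual⟩
end

section
/- Let 𝐭 = (a_s:b_s, ..., a_1:b_1) be a nonempty index tuple in column standard form with indices from {0,...,k−1}, and let x ∈ {0,...,b_s−1} be such that (𝐭, x) satisfies the SIP. Then the number of strings of csf(𝐭, x) equals the number of strings of 𝐭 if and only if x − 1 ∈ heads(𝐭). In particular, x = 0 always increases the number of strings. -/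
/-- The Successor Infix Property: between any two equal indices of the tuple there is an
occurrence of their successor. -/
def SIP (t : List ℕ) : Prop :=
  ∀ a b : Fin t.length, a < b → t.get a = t.get b →
    ∃ c : Fin t.length, a < c ∧ c < b ∧ t.get c = t.get a + 1

/-- One swap of two adjacent distinct commuting indices (indices differing by ≥ 2). -/
def CommuteStep (t t' : List ℕ) : Prop :=
  ∃ (u v : List ℕ) (x y : ℕ), x ≠ y ∧ x + 1 ≠ y ∧ y + 1 ≠ x ∧
    t = u ++ x :: y :: v ∧ t' = u ++ y :: x :: v

/-- Equivalence of index tuples: generated by swapping adjacent commuting indices. -/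
def TupleEquiv : List ℕ → List ℕ → Prop := Relation.ReflTransGen CommuteStep

/-- The string `(a : b) = (a, a+1, ..., b)`. -/
def strTuple (a b : ℕ) : List ℕ := List.range' a (b + 1 - a)

/-- The tuple `(a_s : b_s, ..., a_1 : b_1)` built from a list of pairs of endpoints. -/
def buildCSF (ps : List (ℕ × ℕ)) : List ℕ :=
  (ps.map fun p => strTuple p.1 p.2).flatten

/-- `ps` encodes a tuple in column standard form: each pair `(a_j, b_j)` has `a_j ≤ b_j`
and the heads `b_s > b_{s-1} > ... > b_1` are strictly decreasing. -/
def IsCSFDecomp (ps : List (ℕ × ℕ)) : Prop :=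
  (∀ pr ∈ ps, pr.1 ≤ pr.2) ∧ List.Chain' (· > ·) (ps.map Prod.snd)

/-- The set of heads of an index tuple `t`: the right endpoints of the strings of the
column standard form of `t`. -/
def headsSet (t : List ℕ) : Set ℕ :=
  {h | ∃ ps, IsCSFDecomp ps ∧ TupleEquiv t (buildCSF ps) ∧ h ∈ ps.map Prod.snd}

/-!
By the SIP, `x` is not itself a head: every entry after the head `b_j` is smaller than `b_j`,
so no `b_j + 1` separates `b_j` from a final `x = b_j`. If `x - 1 = b_j` is a head, `x` commutes
leftwards past all later strings (their entries are at most `x - 2`) and extends `a_j:b_j` to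
`a_j:x`; otherwise it commutes past every string with head below `x` and becomes a new string
`x:x`. The two cases are told apart by the number of strings, because the heads of a column
standard form are an invariant of equivalence: a commuting swap never exchanges two letters
of `{v, v+1}`, so the restriction of a tuple to these letters is invariant, and in a column
standard form the occurrences of `v` in this restriction not immediately followed by `v + 1`
are exactly the strings with head `v`.
-/

@[simp]
lemma mem_strTuple {a b e : ℕ} : e ∈ strTuple a b ↔ a ≤ e ∧ e ≤ b := by
  rw [strTuple, List.mem_range'_1]
  omega

lemma strTuple_eq_range'_append {a b : ℕ} (h : a ≤ b) :
    strTuple a b = List.range' a (b - a) ++ [b] := by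
  rw [strTuple, show b + 1 - a = b - a + 1 by omega, List.range'_concat]
  congr 2
  omega

@[simp]
lemma strTuple_self (a : ℕ) : strTuple a a = [a] := by
  simp [strTuple_eq_range'_append le_rfl]

lemma strTuple_succ {a b : ℕ} (h : a ≤ b + 1) : strTuple a (b + 1) = strTuple a b ++ [b + 1] := by
  rw [strTuple_eq_range'_append h]
  rfl

lemma strTuple_eq_nil {a b : ℕ} (h : b < a) : strTuple a b = [] := by
  rw [strTuple, show b + 1 - a = 0 by omega, List.range'_zero]

@[simp]
lemma buildCSF_nil : buildCSF [] = [] := rfl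

@[simp]
lemma buildCSF_cons (pr : ℕ × ℕ) (ps : List (ℕ × ℕ)) :
    buildCSF (pr :: ps) = strTuple pr.1 pr.2 ++ buildCSF ps := by
  simp [buildCSF]

@[simp]
lemma buildCSF_append (ps qs : List (ℕ × ℕ)) :
    buildCSF (ps ++ qs) = buildCSF ps ++ buildCSF qs := by
  simp [buildCSF]

lemma exists_le_snd_of_mem_buildCSF {ps : List (ℕ × ℕ)} {e : ℕ} (he : e ∈ buildCSF ps) :
    ∃ pr ∈ ps, e ≤ pr.2 := by
  simp only [buildCSF, List.mem_flatten, List.mem_map] at he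
  obtain ⟨_, ⟨pr, hpr, rfl⟩, he⟩ := he
  exact ⟨pr, hpr, (mem_strTuple.mp he).2⟩

lemma isCSFDecomp_iff {ps : List (ℕ × ℕ)} :
    IsCSFDecomp ps ↔ (∀ pr ∈ ps, pr.1 ≤ pr.2) ∧ (ps.map Prod.snd).Pairwise (· > ·) := by
  rw [IsCSFDecomp, List.Chain', List.isChain_iff_pairwise]

lemma IsCSFDecomp.sublist {ps qs : List (ℕ × ℕ)} (h : IsCSFDecomp ps) (hqs : qs.Sublist ps) :
    IsCSFDecomp qs := by
  rw [isCSFDecomp_iff] at h ⊢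
  exact ⟨fun pr hpr => h.1 pr (hqs.subset hpr), h.2.sublist (hqs.map _)⟩

lemma IsCSFDecomp.of_append_cons {p₁ p₂ : List (ℕ × ℕ)} {a b : ℕ}
    (h : IsCSFDecomp (p₁ ++ (a, b) :: p₂)) :
    a ≤ b ∧ (∀ pr ∈ p₁, b < pr.2) ∧ ∀ pr ∈ p₂, pr.2 < b := by
  rw [isCSFDecomp_iff] at h
  simp only [List.map_append, List.map_cons, List.pairwise_append, List.pairwise_cons,
    List.mem_append, List.mem_cons, List.forall_mem_map] at h
  exact ⟨h.1 _ (Or.inr (Or.inl rfl)), fun pr hpr => h.2.2.2 pr hpr b (Or.inl rfl), h.2.2.1.1⟩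

lemma IsCSFDecomp.insert {p₁ p₂ : List (ℕ × ℕ)} {a x : ℕ} (h : IsCSFDecomp (p₁ ++ p₂))
    (hax : a ≤ x) (hp₁ : ∀ pr ∈ p₁, x < pr.2) (hp₂ : ∀ pr ∈ p₂, pr.2 < x) :
    IsCSFDecomp (p₁ ++ (a, x) :: p₂) := by
  rw [isCSFDecomp_iff] at h ⊢
  simp only [List.map_append, List.map_cons, List.pairwise_append, List.pairwise_cons,
    List.mem_append, List.mem_cons, List.forall_mem_map] at h ⊢
  grind

def pairRestrict (v : ℕ) (t : List ℕ) : List ℕ :=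
  t.filter fun z => z = v ∨ z = v + 1

def unpairedCount (v : ℕ) : List ℕ → ℕ
  | [] => 0
  | z :: l => (if z = v ∧ l.head? ≠ some (v + 1) then 1 else 0) + unpairedCount v l

@[simp]
lemma pairRestrict_append (v : ℕ) (s t : List ℕ) :
    pairRestrict v (s ++ t) = pairRestrict v s ++ pairRestrict v t :=
  List.filter_append ..

lemma pairRestrict_eq_nil {v : ℕ} {t : List ℕ} (h : ∀ z ∈ t, z < v) : pairRestrict v t = [] := by
  refine List.filter_eq_nil_iff.mpr fun z hz => ?_
  have := h z hz
  simp only [decide_eq_true_eq]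
  omega

lemma pairRestrict_eq_of_commuteStep {t t' : List ℕ} (h : CommuteStep t t') (v : ℕ) :
    pairRestrict v t = pairRestrict v t' := by
  obtain ⟨u, w, x, y, hxy, hxy', hyx, rfl, rfl⟩ := h
  have : ¬ (x = v ∨ x = v + 1) ∨ ¬ (y = v ∨ y = v + 1) := by omega
  rcases this with h | h <;> simp [pairRestrict, List.filter_cons, h]

lemma pairRestrict_eq_of_tupleEquiv {t t' : List ℕ} (h : TupleEquiv t t') (v : ℕ) :
    pairRestrict v t = pairRestrict v t' := by
  induction h with
  | refl => rfl
  | tail _ hstep ih => exact ih.trans (pairRestrict_eq_of_commuteStep hstep v)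

lemma pairRestrict_strTuple (v a b : ℕ) :
    pairRestrict v (strTuple a b) = strTuple (max a v) (min b (v + 1)) :=
  ((List.pairwise_lt_range' (s := a)).filter _).eq_of_mem_iff (List.pairwise_lt_range' ..)
    fun z => by
      simp only [List.mem_filter, List.mem_range'_1, decide_eq_true_eq, mem_strTuple]
      omega

lemma unpairedCount_strTuple_append {v c : ℕ} (hc : v ≤ c) (l : List ℕ) :
    unpairedCount v (strTuple c (v + 1) ++ l) = unpairedCount v l := by
  obtain rfl | rfl | hc := (by omega : c = v ∨ c = v + 1 ∨ v + 1 < c)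
  · simp [strTuple_succ, unpairedCount]
  · simp [unpairedCount]
  · rw [strTuple_eq_nil hc, List.nil_append]

lemma unpairedCount_pairRestrict_buildCSF {ps : List (ℕ × ℕ)} (hps : IsCSFDecomp ps) (v : ℕ) :
    unpairedCount v (pairRestrict v (buildCSF ps)) = (ps.map Prod.snd).count v := by
  induction ps with
  | nil => rfl
  | cons pr ps ih =>
    obtain ⟨a, b⟩ := pr
    obtain ⟨hle, hlt⟩ : a ≤ b ∧ ∀ pr ∈ ps, pr.2 < b := by
      have h := isCSFDecomp_iff.mp hps
      simp only [List.map_cons, List.pairwise_cons, List.forall_mem_map] at h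
      exact ⟨h.1 _ List.mem_cons_self, h.2.1⟩
    rw [buildCSF_cons, pairRestrict_append, pairRestrict_strTuple, List.map_cons, List.count_cons,
      ← ih (hps.sublist (List.sublist_cons_self _ _))]
    rcases lt_trichotomy b v with h | rfl | h
    · rw [strTuple_eq_nil (by omega), List.nil_append]
      simp [h.ne]
    · have hnil : pairRestrict b (buildCSF ps) = [] := pairRestrict_eq_nil fun z hz => by
        obtain ⟨pr, hpr, hz⟩ := exists_le_snd_of_mem_buildCSF hz
        exact hz.trans_lt (hlt pr hpr)
      simp [hnil, unpairedCount, max_eq_right hle]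
    · rw [min_eq_right h, unpairedCount_strTuple_append (le_max_right a v)]
      simp [h.ne']

lemma heads_eq_of_tupleEquiv {t : List ℕ} {ps qs : List (ℕ × ℕ)} (hps : IsCSFDecomp ps)
    (hqs : IsCSFDecomp qs) (htp : TupleEquiv t (buildCSF ps)) (htq : TupleEquiv t (buildCSF qs)) :
    ps.map Prod.snd = qs.map Prod.snd :=
  (isCSFDecomp_iff.mp hps).2.eq_of_mem_iff (isCSFDecomp_iff.mp hqs).2 fun v => by
    rw [← List.count_pos_iff, ← List.count_pos_iff, ← unpairedCount_pairRestrict_buildCSF hps,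
      ← unpairedCount_pairRestrict_buildCSF hqs, ← pairRestrict_eq_of_tupleEquiv htp,
      ← pairRestrict_eq_of_tupleEquiv htq]

lemma SIP.succ_mem_between {P Q R : List ℕ} {x : ℕ} (h : SIP (P ++ x :: (Q ++ x :: R))) :
    x + 1 ∈ Q := by
  set t := P ++ x :: (Q ++ x :: R) with ht
  have hlen : t.length = P.length + (Q.length + 1) + R.length + 1 := by simp [ht]; omega
  have hget : ∀ (n : ℕ) (hn : n < Q.length), t[P.length + (n + 1)]'(by omega) = Q[n] := by
    intro n hn
    simp [ht, List.getElem_append_left hn]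
  obtain ⟨⟨c, hct⟩, hic, hcj, hc⟩ := h ⟨P.length, by omega⟩ ⟨P.length + (Q.length + 1), by omega⟩
    (by simp only [Fin.mk_lt_mk]; omega) (by simp [ht])
  simp only [Fin.mk_lt_mk] at hic hcj
  obtain ⟨n, rfl⟩ : ∃ n, c = P.length + (n + 1) := ⟨c - P.length - 1, by omega⟩
  have hxt : t[P.length] = x := by simp [ht]
  simp only [List.get_eq_getElem, hxt, hget n (by omega)] at hc
  exact hc ▸ List.getElem_mem _

lemma not_mem_heads_of_SIP {ps : List (ℕ × ℕ)} {x : ℕ} (hps : IsCSFDecomp ps)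
    (hsip : SIP (buildCSF ps ++ [x])) : x ∉ ps.map Prod.snd := by
  intro hx
  obtain ⟨⟨a, x⟩, hpr, rfl⟩ := List.mem_map.mp hx
  obtain ⟨p₁, p₂, rfl⟩ := List.append_of_mem hpr
  obtain ⟨hle, -, hp₂⟩ := hps.of_append_cons
  have hsip' : SIP ((buildCSF p₁ ++ List.range' a (x - a)) ++ x :: (buildCSF p₂ ++ [x])) := by
    simpa [strTuple_eq_range'_append hle] using hsip
  obtain ⟨pr, hpr, hle'⟩ := exists_le_snd_of_mem_buildCSF hsip'.succ_mem_between
  have := hp₂ pr hpr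
  omega

lemma exists_append_of_not_mem_heads {ps : List (ℕ × ℕ)} {x : ℕ} (hps : IsCSFDecomp ps)
    (hx : x ∉ ps.map Prod.snd) :
    ∃ p₁ p₂, ps = p₁ ++ p₂ ∧ (∀ pr ∈ p₁, x < pr.2) ∧ ∀ pr ∈ p₂, pr.2 < x := by
  induction ps with
  | nil => exact ⟨[], [], rfl, by simp, by simp⟩
  | cons pr ps ih =>
    obtain ⟨a, b⟩ := pr
    obtain ⟨-, -, hlt⟩ := IsCSFDecomp.of_append_cons (p₁ := []) hps
    simp only [List.map_cons, List.mem_cons, not_or] at hx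
    by_cases hxb : x < b
    · obtain ⟨p₁, p₂, rfl, hp₁, hp₂⟩ :=
        ih (hps.sublist (List.sublist_cons_self _ _)) hx.2
      exact ⟨(a, b) :: p₁, p₂, rfl, by simpa [hxb] using hp₁, hp₂⟩
    · refine ⟨[], (a, b) :: ps, rfl, by simp, ?_⟩
      simp only [List.mem_cons, forall_eq_or_imp]
      exact ⟨by omega, fun pr hpr => by have := hlt pr hpr; omega⟩

lemma tupleEquiv_append_singleton {x : ℕ} (U L : List ℕ) (hL : ∀ e ∈ L, e + 2 ≤ x) :
    TupleEquiv (U ++ L ++ [x]) (U ++ x :: L) := by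
  induction L generalizing U with
  | nil => rw [List.append_nil]; exact Relation.ReflTransGen.refl
  | cons e L ih =>
    have he := hL e List.mem_cons_self
    have hswap : CommuteStep ((U ++ [e]) ++ x :: L) (U ++ x :: e :: L) :=
      ⟨U, L, e, x, by omega, by omega, by omega, by simp, rfl⟩
    have h : TupleEquiv (U ++ [e] ++ L ++ [x]) (U ++ x :: e :: L) :=
      (ih (U ++ [e]) fun e' he' => hL e' (List.mem_cons_of_mem _ he')).tail hswap
    simpa using h

lemma tupleEquiv_buildCSF_append_singleton {p₁ p₂ : List (ℕ × ℕ)} {x : ℕ}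
    (hp₂ : ∀ pr ∈ p₂, pr.2 + 2 ≤ x) :
    TupleEquiv (buildCSF (p₁ ++ p₂) ++ [x]) (buildCSF p₁ ++ x :: buildCSF p₂) := by
  rw [buildCSF_append]
  refine tupleEquiv_append_singleton _ _ fun e he => ?_
  obtain ⟨pr, hpr, hle⟩ := exists_le_snd_of_mem_buildCSF he
  have := hp₂ pr hpr
  omega

lemma exists_csf_extend_string {ps : List (ℕ × ℕ)} {y : ℕ} (hps : IsCSFDecomp ps)
    (hy : y ∈ ps.map Prod.snd) (hy' : y + 1 ∉ ps.map Prod.snd) :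
    ∃ qs, IsCSFDecomp qs ∧ TupleEquiv (buildCSF ps ++ [y + 1]) (buildCSF qs) ∧
      qs.length = ps.length := by
  obtain ⟨⟨a, y⟩, hpr, rfl⟩ := List.mem_map.mp hy
  obtain ⟨p₁, p₂, rfl⟩ := List.append_of_mem hpr
  obtain ⟨hle, hp₁, hp₂⟩ := hps.of_append_cons
  refine ⟨p₁ ++ (a, y + 1) :: p₂, ?_, ?_, by simp⟩
  · refine (hps.sublist ((List.sublist_cons_self _ _).append_left p₁)).insert (by omega)
      (fun pr hpr => ?_) fun pr hpr => (hp₂ pr hpr).trans (Nat.lt_succ_self y)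
    have hne : pr.2 ≠ y + 1 := fun h =>
      hy' (h ▸ List.mem_map_of_mem (List.mem_append_left _ hpr))
    have := hp₁ pr hpr
    omega
  · have h := tupleEquiv_buildCSF_append_singleton (p₁ := p₁ ++ [(a, y)]) (x := y + 1)
      fun pr hpr => by have := hp₂ pr hpr; omega
    simpa [strTuple_succ (Nat.le_succ_of_le hle)] using h

lemma exists_csf_new_string {ps : List (ℕ × ℕ)} {x : ℕ} (hps : IsCSFDecomp ps)
    (hx : x ∉ ps.map Prod.snd) (hx' : ∀ y ∈ ps.map Prod.snd, y + 1 ≠ x) :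
    ∃ qs, IsCSFDecomp qs ∧ TupleEquiv (buildCSF ps ++ [x]) (buildCSF qs) ∧
      qs.length = ps.length + 1 := by
  obtain ⟨p₁, p₂, rfl, hp₁, hp₂⟩ := exists_append_of_not_mem_heads hps hx
  refine ⟨p₁ ++ (x, x) :: p₂, hps.insert le_rfl hp₁ hp₂, ?_, by simp; omega⟩
  have h := tupleEquiv_buildCSF_append_singleton (p₁ := p₁) (x := x) fun pr hpr => by
    have := hx' pr.2 (List.mem_map_of_mem (List.mem_append_right _ hpr))
    have := hp₂ pr hpr
    omega
  simpa using h

theorem typeI_iff_pred_head_general (ps : List (ℕ × ℕ)) (hps : IsCSFDecomp ps) (x : ℕ)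
    (hsip : SIP (buildCSF ps ++ [x])) :
    ((∃ ps', IsCSFDecomp ps' ∧ TupleEquiv (buildCSF ps ++ [x]) (buildCSF ps') ∧
        ps'.length = ps.length) ↔ ∃ y ∈ ps.map Prod.snd, y + 1 = x) ∧
    (x = 0 → ¬ ∃ ps', IsCSFDecomp ps' ∧ TupleEquiv (buildCSF ps ++ [x]) (buildCSF ps') ∧
        ps'.length = ps.length) := by
  have hx := not_mem_heads_of_SIP hps hsip
  by_cases hpred : ∃ y ∈ ps.map Prod.snd, y + 1 = x
  · obtain ⟨y, hy, rfl⟩ := hpred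
    exact ⟨iff_of_true (exists_csf_extend_string hps hy hx) ⟨y, hy, rfl⟩, by omega⟩
  · push Not at hpred
    obtain ⟨qs, hqs, hequiv, hlen⟩ := exists_csf_new_string hps hx hpred
    have hno : ¬ ∃ ps', IsCSFDecomp ps' ∧ TupleEquiv (buildCSF ps ++ [x]) (buildCSF ps') ∧
        ps'.length = ps.length := by
      rintro ⟨ps', hps', hequiv', hlen'⟩
      have := congrArg List.length (heads_eq_of_tupleEquiv hps' hqs hequiv' hequiv)
      simp only [List.length_map] at this
      omega
    exact ⟨iff_of_false hno (by simpa using hpred), fun _ => hno⟩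

/-- Proposition: let `t = (a_s:b_s, …, a_1:b_1)` be a nonempty tuple in column standard
form (encoded by `ps`) with indices from `{0,…,k-1}` and let `x < b_s` be such that
`(t, x)` satisfies the SIP. Then `csf(t,x)` has the same number of strings as `t` if and
only if `x - 1` is a head of `t` (i.e. `x = y + 1` for some head `y`); in particular
`x = 0` is always of Type II (it increases the number of strings). -/
theorem typeI_iff_pred_head (k : ℕ) (ps : List (ℕ × ℕ)) (hps : IsCSFDecomp ps)
    (hne : ps ≠ []) (hk : ∀ pr ∈ ps, pr.2 < k)
    (x : ℕ) (hx : x < (ps.head hne).2)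
    (hsip : SIP (buildCSF ps ++ [x])) :
    ((∃ ps', IsCSFDecomp ps' ∧ TupleEquiv (buildCSF ps ++ [x]) (buildCSF ps') ∧
        ps'.length = ps.length) ↔ ∃ y ∈ ps.map Prod.snd, y + 1 = x) ∧
    (x = 0 → ¬ ∃ ps', IsCSFDecomp ps' ∧ TupleEquiv (buildCSF ps ++ [x]) (buildCSF ps') ∧
        ps'.length = ps.length) :=
  typeI_iff_pred_head_general ps hps x hsip
end
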